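/- Let A be an n×n real matrix (n ≥ 1) with no zero row and no zero column. Define the diagonal matrix D₁ by D₁(i,i) = max_j |A(i,j)|, set B = D₁⁻¹ A, and define the diagonal matrix D₂ by D₂(j,j) = (max_i |B(i,j)|)⁻¹. Then the two-sided equilibrated matrix C = D₁⁻¹ A D₂ = B D₂ satisfies: every entry of C has absolute value at most 1, and in every row and in every column of C the maximum absolute value of the entries equals exactly 1. -/
import Mathlib

open Matrix

private lemma sup_attained {n : ℕ} [NeZero n] (f : Fin n → ℝ) :
    ∃ j, (⨆ k, f k) = f j ∧ ∀ k, f k ≤ f j := by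
  obtain ⟨j, hj⟩ := Finite.exists_max f
  exact ⟨j, le_antisymm (ciSup_le hj) (le_ciSup (Set.Finite.bddAbove (Set.finite_range f)) j), hj⟩

/-- Row-then-column equilibration: let `A : Matrix (Fin n) (Fin n) ℝ` (with `n ≥ 1`) have no
zero row and no zero column.  With `D₁ i i = max_j |A i j|`, `B = D₁⁻¹ A`, and
`D₂ j j = (max_i |B i j|)⁻¹`, the matrix `C = D₁⁻¹ A D₂ = B D₂` has all entries of absolute
value at most `1`, and in every row and every column of `C` the maximum absolute value of the
entries is exactly `1`. -/
theorem row_column_equilibration {n : ℕ} (hn : 1 ≤ n) (A : Matrix (Fin n) (Fin n) ℝ)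
    (hrow : ∀ i, ∃ j, A i j ≠ 0) (hcol : ∀ j, ∃ i, A i j ≠ 0)
    (D₁ B D₂ C : Matrix (Fin n) (Fin n) ℝ)
    (hD₁ : D₁ = Matrix.diagonal fun i => ⨆ j, |A i j|)
    (hB : B = D₁⁻¹ * A)
    (hD₂ : D₂ = Matrix.diagonal fun j => (⨆ i, |B i j|)⁻¹)
    (hC : C = D₁⁻¹ * A * D₂) :
    (∀ i j, |C i j| ≤ 1) ∧
    (∀ i, (⨆ j, |C i j|) = 1) ∧
    (∀ j, (⨆ i, |C i j|) = 1) := by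
  haveI : NeZero n := ⟨by omega⟩
  set r : Fin n → ℝ := fun i => ⨆ j, |A i j| with hr
  -- r i > 0
  have hrpos : ∀ i, 0 < r i := by
    intro i
    obtain ⟨j, hj⟩ := hrow i
    obtain ⟨j', hj', hmax⟩ := sup_attained (fun j => |A i j|)
    calc 0 < |A i j| := abs_pos.mpr hj
    _ ≤ |A i j'| := hmax j
    _ = r i := hj'.symm
  -- D₁⁻¹ is diagonal of inverses
  have hD₁inv : D₁⁻¹ = Matrix.diagonal fun i => (r i)⁻¹ := by
    apply Matrix.inv_eq_right_inv
    rw [hD₁, Matrix.diagonal_mul_diagonal]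
    convert Matrix.diagonal_one with i
    exact mul_inv_cancel₀ (ne_of_gt (hrpos i))
  -- entries of B
  have hBe : ∀ i j, B i j = (r i)⁻¹ * A i j := by
    intro i j
    rw [hB, hD₁inv, Matrix.diagonal_mul]
  have hBabs : ∀ i j, |B i j| = |A i j| / r i := by
    intro i j
    rw [hBe, abs_mul, abs_inv, abs_of_pos (hrpos i), inv_mul_eq_div]
  have hBle : ∀ i j, |B i j| ≤ 1 := by
    intro i j
    rw [hBabs]
    rw [div_le_one (hrpos i)]
    exact le_ciSup (f := fun k => |A i k|) (Set.Finite.bddAbove (Set.finite_range _)) j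
  set c : Fin n → ℝ := fun j => ⨆ i, |B i j| with hc
  have hcpos : ∀ j, 0 < c j := by
    intro j
    obtain ⟨i, hi⟩ := hcol j
    obtain ⟨i', hi', hmax⟩ := sup_attained (fun i => |B i j|)
    have : 0 < |B i j| := by
      rw [hBabs]
      exact div_pos (abs_pos.mpr hi) (hrpos i)
    calc 0 < |B i j| := this
    _ ≤ |B i' j| := hmax i
    _ = c j := hi'.symm
  have hcle : ∀ j, c j ≤ 1 := by
    intro j
    exact ciSup_le fun i => hBle i j
  -- entries of C
  have hCB : C = B * D₂ := by rw [hC, hB, Matrix.mul_assoc]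
  have hCe : ∀ i j, C i j = B i j * (c j)⁻¹ := by
    intro i j
    rw [hCB, hD₂, Matrix.mul_diagonal]
  have hCabs : ∀ i j, |C i j| = |B i j| / c j := by
    intro i j
    rw [hCe, abs_mul, abs_inv, abs_of_pos (hcpos j), ← div_eq_mul_inv]
  have h1 : ∀ i j, |C i j| ≤ 1 := by
    intro i j
    rw [hCabs, div_le_one (hcpos j)]
    exact le_ciSup (f := fun k => |B k j|) (Set.Finite.bddAbove (Set.finite_range _)) i
  refine ⟨h1, ?_, ?_⟩
  · intro i
    apply le_antisymm (ciSup_le fun j => h1 i j)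
    -- row max of B is 1, and |C i j| ≥ |B i j|
    obtain ⟨j, hj, hmax⟩ := sup_attained (fun j => |A i j|)
    have hB1 : |B i j| = 1 := by
      rw [hBabs, ← hj]
      exact div_self (ne_of_gt (hrpos i))
    have : (1 : ℝ) ≤ |C i j| := by
      rw [hCabs, hB1, le_div_iff₀ (hcpos j), one_mul]
      exact hcle j
    exact le_trans this (le_ciSup (f := fun k => |C i k|) (Set.Finite.bddAbove (Set.finite_range _)) j)
  · intro j
    apply le_antisymm (ciSup_le fun i => h1 i j)
    obtain ⟨i, hi, hmax⟩ := sup_attained (fun i => |B i j|)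
    have hcj : c j = |B i j| := hi
    have : |C i j| = 1 := by
      rw [hCabs, hcj]
      exact div_self (ne_of_gt (hcj ▸ hcpos j))
    exact le_trans (le_of_eq this.symm)
      (le_ciSup (f := fun k => |C k j|) (Set.Finite.bddAbove (Set.finite_range _)) i)
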